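/- Let a, b > 0 and α > ln((1+√2)/2). Define Δ = ((a-b)/(a+b))²·(e^{-α}/2)² - (1 - a·e^{-α}/(a+b))·(1 - b·e^{-α}/(a+b)). Then Δ < 0. -/
import Mathlib


theorem stmt_5 (a b α : ℝ) (ha : 0 < a) (hb : 0 < b)
    (hα : Real.log ((1 + Real.sqrt 2) / 2) < α) :
    ((a - b) / (a + b)) ^ 2 * (Real.exp (-α) / 2) ^ 2 -
      (1 - a * Real.exp (-α) / (a + b)) * (1 - b * Real.exp (-α) / (a + b)) < 0 := by
  have hs2 : Real.sqrt 2 ^ 2 = 2 := Real.sq_sqrt (by norm_num)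
  have hs1 : 1 < Real.sqrt 2 := by nlinarith [Real.sqrt_nonneg 2]
  have hpos : (0:ℝ) < (1 + Real.sqrt 2) / 2 := by positivity
  have ht : Real.exp (-α) < ((1 + Real.sqrt 2) / 2)⁻¹ := by
    rw [← Real.exp_log hpos, ← Real.exp_neg]
    exact Real.exp_lt_exp.mpr (by linarith)
  have ht' : Real.exp (-α) < 2 * (Real.sqrt 2 - 1) := by
    have h2 : ((1 + Real.sqrt 2) / 2)⁻¹ = 2 * (Real.sqrt 2 - 1) := by
      rw [inv_eq_iff_eq_inv, eq_comm, inv_eq_iff_eq_inv]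
      · field_simp
        nlinarith
    linarith [h2 ▸ ht]
  have he : 0 < Real.exp (-α) := Real.exp_pos _
  have hab : 0 < a + b := by linarith
  set t := Real.exp (-α) with htdef
  have hu : ((a - b) / (a + b)) ^ 2 ≤ 1 := by
    rw [div_pow]
    apply div_le_one_of_le₀
    · nlinarith
    · positivity
  have hne : (a + b) ≠ 0 := ne_of_gt hab
  rw [sub_neg]
  have h1 : 1 - a * t / (a + b) = ((a + b) - a * t) / (a + b) := by field_simp
  have h2 : 1 - b * t / (a + b) = ((a + b) - b * t) / (a + b) := by field_simp
  rw [h1, h2, div_mul_div_comm,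
    show ((a - b) / (a + b)) ^ 2 * (t / 2) ^ 2 = ((a - b) ^ 2 * t ^ 2) / (4 * (a + b) ^ 2) by
      rw [div_pow, div_pow, div_mul_div_comm, div_eq_div_iff (by positivity) (by positivity)]
      ring,
    div_lt_div_iff₀ (by positivity) (by positivity)]
  have hd1 : 0 < 2 - t - Real.sqrt 2 * t := by nlinarith
  have hd2 : 0 < 2 - t + Real.sqrt 2 * t := by nlinarith
  have hd : 2 * t ^ 2 < (2 - t) ^ 2 := by nlinarith [mul_pos hd1 hd2, sq_nonneg t]
  nlinarith [mul_pos (mul_pos hab hab) (sub_pos.mpr hd),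
    mul_nonneg (by nlinarith : (0:ℝ) ≤ (a + b) ^ 2 - (a - b) ^ 2) (sq_nonneg t),
    mul_pos hab hab, sq_nonneg t]
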